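/- (Lemma 1 specialization) In a finite MDP under any fixed strategy, for every starting state s and every strategy σ, with probability 1 the set of states visited infinitely often by the resulting random path is an end component of the MDP: Pr_s^σ({ ω : Inf(ω) ∈ E(G) }) = 1, where E(G) denotes the set of end components of G. -/

import Mathlib

/-!
Off a null set the path moves only along edges, and every edge `a → b` out of a probabilistic
state `a` that is visited infinitely often is taken infinitely often. For the latter, fix a time
`N`: every visit to `a` takes the edge with probability `p = δ a b > 0`, whatever the history, so
the potential `(1 - p) ^ (k - #visits to a)`, killed once the edge is taken after `N`, is a
supermartingale; hence `k` visits after `N` without taking the edge have probability at most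
`(1 - p) ^ k`. Such a path eventually stays in its (nonempty, as `S` is finite) set of
infinitely visited states and walks along edges there, which makes that set strongly connected;
it is closed under probabilistic successors by the second property.
-/

open MeasureTheory
open scoped Classical

/-- The set of states occurring infinitely often along an infinite path. -/
def InfOcc {S : Type*} (ω : ℕ → S) : Set S := {s | {n : ℕ | ω n = s}.Infinite}

/-- Reachability inside a set `U` via edges of `E` staying in `U`. -/
def ReachIn {S : Type*} (E : S → Set S) (U : Set S) (s t : S) : Prop :=
  Relation.ReflTransGen (fun a b => a ∈ U ∧ b ∈ U ∧ b ∈ E a) s t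

/-- `U` is an end component: nonempty, δ-closed, strongly connected. -/
def IsEndComponent {S : Type*} (E : S → Set S) (SP : Set S) (U : Set S) : Prop :=
  U.Nonempty ∧ (∀ s ∈ U ∩ SP, E s ⊆ U) ∧ ∀ s ∈ U, ∀ t ∈ U, ReachIn E U s t

open Filter

section Deterministic

variable {S : Type*} {ω : ℕ → S}

theorem mem_infOcc_iff_frequently {s : S} : s ∈ InfOcc ω ↔ ∃ᶠ n in atTop, ω n = s :=
  Nat.frequently_atTop_iff_infinite.symm

theorem infOcc_nonempty [Finite S] (ω : ℕ → S) : (InfOcc ω).Nonempty := by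
  obtain ⟨s, hs⟩ := Finite.exists_infinite_fiber ω
  exact ⟨s, Set.infinite_coe_iff.mp hs⟩

theorem eventually_mem_infOcc [Finite S] (ω : ℕ → S) : ∀ᶠ n in atTop, ω n ∈ InfOcc ω := by
  have hfin : {n | ω n ∉ InfOcc ω}.Finite :=
    (Set.toFinite {s | s ∉ InfOcc ω}).preimage' fun s hs => Set.not_infinite.mp hs
  simpa [← Nat.cofinite_eq_atTop] using hfin.eventually_cofinite_notMem

theorem reachIn_of_forall_ge_mem {E : S → Set S} {U : Set S} (hedge : ∀ n, ω (n + 1) ∈ E (ω n))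
    {N : ℕ} (hU : ∀ n ≥ N, ω n ∈ U) {m n : ℕ} (hNm : N ≤ m) (hmn : m ≤ n) :
    ReachIn E U (ω m) (ω n) := by
  induction n, hmn using Nat.le_induction with
  | base => exact .refl
  | succ n hmn ih => exact ih.tail ⟨hU n (by omega), hU (n + 1) (by omega), hedge n⟩

theorem isEndComponent_infOcc [Finite S] {E : S → Set S} {SP : Set S}
    (hedge : ∀ n, ω (n + 1) ∈ E (ω n))
    (hfair : ∀ a ∈ InfOcc ω, a ∈ SP → ∀ b ∈ E a, ∃ᶠ n in atTop, ω n = a ∧ ω (n + 1) = b) :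
    IsEndComponent E SP (InfOcc ω) := by
  refine ⟨infOcc_nonempty ω, fun a ⟨ha, haSP⟩ b hb => ?_, fun x hx y hy => ?_⟩
  · exact mem_infOcc_iff_frequently.mpr <|
      (tendsto_add_atTop_nat 1).frequently <| (hfair a ha haSP b hb).mono fun n h => h.2
  · obtain ⟨N, hN⟩ := eventually_atTop.mp (eventually_mem_infOcc ω)
    obtain ⟨m, hNm, rfl⟩ := frequently_atTop.mp (mem_infOcc_iff_frequently.mp hx) N
    obtain ⟨n, hmn, rfl⟩ := frequently_atTop.mp (mem_infOcc_iff_frequently.mp hy) m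
    exact reachIn_of_forall_ge_mem hedge hN hNm hmn

end Deterministic

section PathMeasure

variable {S : Type*}

/-- `κ w s t` is the probability of stepping from `s` to `t` when `w` lists the earlier states. -/
noncomputable def pathWeight (κ : List S → S → S → ℝ) (g : ℕ → S) (n : ℕ) : ℝ :=
  ∏ i ∈ Finset.range n, κ (List.ofFn fun j : Fin i => g j) (g i) (g (i + 1))

def IsPathMeasure [MeasurableSpace S] (κ : List S → S → S → ℝ) (s : S) (μ : Measure (ℕ → S)) :
    Prop :=
  ∀ (n : ℕ) (g : ℕ → S), μ {ω | ∀ i ≤ n, ω i = g i} =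
    if g 0 = s then ENNReal.ofReal (pathWeight κ g n) else 0

def clampPath {n : ℕ} (f : Fin (n + 1) → S) : ℕ → S := fun i => f (Fin.clamp i n)

theorem clampPath_of_le {n : ℕ} (f : Fin (n + 1) → S) {i : ℕ} (hi : i ≤ n) :
    clampPath f i = f ⟨i, Nat.lt_succ_of_le hi⟩ := by
  simp [clampPath, Fin.clamp, Nat.min_eq_left hi]

theorem clampPath_restrict (ω : ℕ → S) {n i : ℕ} (hi : i ≤ n) :
    clampPath (fun j : Fin (n + 1) => ω j) i = ω i := by
  rw [clampPath_of_le _ hi]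

theorem clampPath_snoc {n : ℕ} (f : Fin (n + 1) → S) (x : S) :
    ∀ i ≤ n + 1, clampPath (Fin.snoc f x) i = Function.update (clampPath f) (n + 1) x i := by
  intro i hi
  rcases hi.lt_or_eq with hi | rfl
  · rw [Function.update_of_ne hi.ne, clampPath_of_le _ hi.le, clampPath_of_le _ (by omega)]
    exact Fin.snoc_castSucc (i := ⟨i, hi⟩) ..
  · rw [Function.update_self, clampPath_of_le _ le_rfl]
    exact Fin.snoc_last ..

variable {κ : List S → S → S → ℝ}

theorem pathWeight_nonneg (hκ0 : ∀ w s t, 0 ≤ κ w s t) (g : ℕ → S) (n : ℕ) :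
    0 ≤ pathWeight κ g n :=
  Finset.prod_nonneg fun _ _ => hκ0 _ _ _

theorem pathWeight_congr {g g' : ℕ → S} {n : ℕ} (h : ∀ i ≤ n, g i = g' i) :
    pathWeight κ g n = pathWeight κ g' n := by
  refine Finset.prod_congr rfl fun i hi => ?_
  have hi := Finset.mem_range.mp hi
  have hprefix : (fun j : Fin i => g j) = fun j : Fin i => g' j := funext fun j => h j (by omega)
  rw [hprefix, h i hi.le, h (i + 1) hi]

theorem pathWeight_update_succ (g : ℕ → S) (n : ℕ) (x : S) :
    pathWeight κ (Function.update g (n + 1) x) (n + 1) =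
      pathWeight κ g n * κ (List.ofFn fun j : Fin n => g j) (g n) x := by
  have hagree : ∀ i ≤ n, Function.update g (n + 1) x i = g i :=
    fun i hi => Function.update_of_ne (by omega) _ _
  have hprefix : (fun j : Fin n => Function.update g (n + 1) x j) = fun j : Fin n => g j :=
    funext fun j => hagree j j.2.le
  rw [pathWeight, Finset.prod_range_succ, ← pathWeight, pathWeight_congr hagree, hprefix,
    hagree n le_rfl, Function.update_self]

variable [Fintype S]

/-- A supermartingale `V` bounds its expectation at time `n` by its value at time `0`. -/
theorem sum_pathWeight_mul_le (hκ0 : ∀ w s t, 0 ≤ κ w s t) {V : ℕ → (ℕ → S) → ℝ}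
    (hV : ∀ n g g', (∀ i ≤ n, g i = g' i) → V n g = V n g')
    (hstep : ∀ n g, ∑ x, κ (List.ofFn fun j : Fin n => g j) (g n) x *
      V (n + 1) (Function.update g (n + 1) x) ≤ V n g) (n : ℕ) :
    ∑ f : Fin (n + 1) → S, pathWeight κ (clampPath f) n * V n (clampPath f) ≤
      ∑ x, V 0 fun _ => x := by
  induction n with
  | zero =>
    rw [← (Equiv.funUnique (Fin 1) S).symm.sum_comp]
    refine le_of_eq (Finset.sum_congr rfl fun x _ => ?_)
    rw [pathWeight, Finset.prod_range_zero, one_mul]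
    exact hV 0 _ _ fun i hi => clampPath_of_le _ hi
  | succ n ih =>
    rw [← (Fin.snocEquiv fun _ => S).sum_comp, Fintype.sum_prod_type_right]
    refine le_trans (Finset.sum_le_sum fun f _ => ?_) ih
    calc ∑ x, pathWeight κ (clampPath (Fin.snoc f x)) (n + 1) *
          V (n + 1) (clampPath (Fin.snoc f x))
        = pathWeight κ (clampPath f) n * ∑ x, κ (List.ofFn fun j : Fin n => clampPath f j)
            (clampPath f n) x * V (n + 1) (Function.update (clampPath f) (n + 1) x) := by
          rw [Finset.mul_sum]
          refine Finset.sum_congr rfl fun x _ => ?_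
          rw [pathWeight_congr (clampPath_snoc f x), hV _ _ _ (clampPath_snoc f x),
            pathWeight_update_succ, mul_assoc]
      _ ≤ pathWeight κ (clampPath f) n * V n (clampPath f) :=
          mul_le_mul_of_nonneg_left (hstep n _) (pathWeight_nonneg hκ0 _ _)

variable [MeasurableSpace S] {s : S} {μ : Measure (ℕ → S)}

theorem IsPathMeasure.measure_le_sum_pathWeight (hμ : IsPathMeasure κ s μ)
    (hκ0 : ∀ w s t, 0 ≤ κ w s t) (n : ℕ) {p : (ℕ → S) → Prop}
    (hp : ∀ g g', (∀ i ≤ n, g i = g' i) → p g → p g') :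
    μ {ω | p ω} ≤ ENNReal.ofReal (∑ f : Fin (n + 1) → S,
      if clampPath f 0 = s ∧ p (clampPath f) then pathWeight κ (clampPath f) n else 0) := by
  have hcover : {ω | p ω} ⊆ ⋃ f ∈ Finset.univ.filter fun f => p (clampPath f),
      {ω | ∀ i ≤ n, ω i = clampPath f i} := fun ω hω =>
    have hω' (i : ℕ) (hi : i ≤ n) := (clampPath_restrict ω hi).symm
    Set.mem_iUnion₂.mpr ⟨fun j => ω j,
      Finset.mem_filter.mpr ⟨Finset.mem_univ _, hp _ _ hω' hω⟩, hω'⟩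
  rw [ENNReal.ofReal_sum_of_nonneg fun f _ => by split_ifs <;> simp [pathWeight_nonneg hκ0]]
  refine (measure_mono hcover).trans <| (measure_biUnion_finset_le _ _).trans (le_of_eq ?_)
  rw [Finset.sum_filter]
  refine Finset.sum_congr rfl fun f _ => ?_
  rw [hμ]
  split_ifs <;> simp_all

theorem IsPathMeasure.ae_mem_edge (hμ : IsPathMeasure κ s μ) (hκ0 : ∀ w s t, 0 ≤ κ w s t)
    {E : S → Set S} (hE : ∀ w s t, t ∉ E s → κ w s t = 0) :
    ∀ᵐ ω ∂μ, ∀ n, ω (n + 1) ∈ E (ω n) := by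
  refine ae_all_iff.mpr fun n => nonpos_iff_eq_zero.mp ?_
  refine (hμ.measure_le_sum_pathWeight hκ0 (n + 1) (p := fun ω => ω (n + 1) ∉ E (ω n))
    fun g g' h => by simp only [h n (by omega), h (n + 1) le_rfl, imp_self]).trans ?_
  refine le_of_eq (ENNReal.ofReal_eq_zero.mpr (le_of_eq (Finset.sum_eq_zero fun f _ => ?_)))
  split_ifs with hf
  · exact Finset.prod_eq_zero (Finset.self_mem_range_succ n) (hE _ _ _ hf.2)
  · rfl

end PathMeasure

section Visits

variable {S : Type*} {a b s : S} {N k n : ℕ} {g g' : ℕ → S}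

noncomputable def visitCount (a : S) (N : ℕ) (g : ℕ → S) (n : ℕ) : ℕ :=
  ((Finset.range n).filter fun i => N ≤ i ∧ g i = a).card

def AvoidsStep (a b : S) (N : ℕ) (g : ℕ → S) (n : ℕ) : Prop :=
  ∀ i < n, N ≤ i → g i = a → g (i + 1) ≠ b

theorem visitCount_congr (h : ∀ i < n, g i = g' i) : visitCount a N g n = visitCount a N g' n := by
  unfold visitCount
  congr 1
  exact Finset.filter_congr fun i hi => by rw [h i (Finset.mem_range.mp hi)]

theorem visitCount_succ :
    visitCount a N g (n + 1) = visitCount a N g n + if N ≤ n ∧ g n = a then 1 else 0 := by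
  unfold visitCount
  rw [Finset.range_add_one, Finset.filter_insert]
  split_ifs with h
  · exact Finset.card_insert_of_notMem (by simp)
  · rfl

theorem visitCount_mono : Monotone (visitCount a N g) := fun _ _ hmn =>
  Finset.card_le_card (Finset.filter_subset_filter _ (Finset.range_subset_range.mpr hmn))

theorem exists_le_visitCount (h : {n | g n = a}.Infinite) (N k : ℕ) :
    ∃ n, k ≤ visitCount a N g n := by
  obtain ⟨t, hts, rfl⟩ := (h.sdiff (Set.finite_lt_nat N)).exists_subset_card_eq k
  refine ⟨t.sup id + 1, Finset.card_le_card fun i hi => ?_⟩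
  have hi' := hts hi
  simp only [Set.mem_sdiff, Set.mem_ofPred_eq, not_lt] at hi'
  have hle : i ≤ t.sup id := Finset.le_sup (f := id) hi
  exact Finset.mem_filter.mpr ⟨Finset.mem_range.mpr (Nat.lt_succ_of_le hle), hi'.2, hi'.1⟩

theorem avoidsStep_congr (h : ∀ i ≤ n, g i = g' i) :
    AvoidsStep a b N g n ↔ AvoidsStep a b N g' n := by
  unfold AvoidsStep
  refine forall₂_congr fun i hi => ?_
  rw [h i hi.le, h (i + 1) hi]

theorem avoidsStep_succ :
    AvoidsStep a b N g (n + 1) ↔ AvoidsStep a b N g n ∧ (N ≤ n → g n = a → g (n + 1) ≠ b) := by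
  simp only [AvoidsStep, Nat.lt_succ_iff_lt_or_eq, or_imp, forall_and, forall_eq]

noncomputable def avoidPotential (s a b : S) (N k : ℕ) (q : ℝ) (n : ℕ) (g : ℕ → S) : ℝ :=
  if g 0 = s ∧ AvoidsStep a b N g n then q ^ (k - visitCount a N g n) else 0

theorem avoidPotential_congr {q : ℝ} (h : ∀ i ≤ n, g i = g' i) :
    avoidPotential s a b N k q n g = avoidPotential s a b N k q n g' := by
  unfold avoidPotential
  rw [h 0 (Nat.zero_le n), avoidsStep_congr h, visitCount_congr fun i hi => h i hi.le]

end Visits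

section Fairness

variable {S : Type*} [Fintype S] {κ : List S → S → S → ℝ} {a b s : S} {N k : ℕ} {q : ℝ}

theorem kernel_le_one (hκ0 : ∀ w s t, 0 ≤ κ w s t) (hκ1 : ∀ w s, ∑ t, κ w s t = 1)
    (w : List S) (s t : S) : κ w s t ≤ 1 :=
  hκ1 w s ▸ Finset.single_le_sum (fun t _ => hκ0 w s t) (Finset.mem_univ t)

theorem sum_mul_avoidPotential_le (hκ0 : ∀ w s t, 0 ≤ κ w s t) (hκ1 : ∀ w s, ∑ t, κ w s t = 1)
    (hq : ∀ w, 1 - κ w a b ≤ q) (hq1 : q ≤ 1) (n : ℕ) (g : ℕ → S) :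
    ∑ x, κ (List.ofFn fun j : Fin n => g j) (g n) x *
      avoidPotential s a b N k q (n + 1) (Function.update g (n + 1) x) ≤
      avoidPotential s a b N k q n g := by
  set w := List.ofFn fun j : Fin n => g j
  have hupd (x : S) : ∀ i ≤ n, Function.update g (n + 1) x i = g i :=
    fun i hi => Function.update_of_ne (by omega) _ _
  have hnext (x : S) : avoidPotential s a b N k q (n + 1) (Function.update g (n + 1) x) =
      if g 0 = s ∧ AvoidsStep a b N g n ∧ (N ≤ n → g n = a → x ≠ b) then
        q ^ (k - (visitCount a N g n + if N ≤ n ∧ g n = a then 1 else 0)) else 0 := by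
    simp only [avoidPotential, avoidsStep_succ, visitCount_succ, Function.update_self,
      avoidsStep_congr (hupd x), visitCount_congr fun i hi => hupd x i hi.le, hupd x 0 n.zero_le,
      hupd x n le_rfl]
  simp only [hnext]
  rw [avoidPotential]
  by_cases hvalid : g 0 = s ∧ AvoidsStep a b N g n
  swap
  · rw [if_neg hvalid]
    exact (Finset.sum_eq_zero fun x _ => by rw [if_neg fun h => hvalid ⟨h.1, h.2.1⟩, mul_zero]).le
  rw [if_pos hvalid]
  have hq0 : 0 ≤ q := (sub_nonneg.mpr (kernel_le_one hκ0 hκ1 w a b)).trans (hq w)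
  by_cases hvisit : N ≤ n ∧ g n = a
  · simp only [hvalid, hvisit, true_and, forall_const, if_true, mul_ite, mul_zero]
    rw [← Finset.sum_filter, Finset.filter_ne', Finset.sum_erase_eq_sub (Finset.mem_univ b),
      ← Finset.sum_mul, hκ1, ← sub_mul]
    calc (1 - κ w a b) * q ^ (k - (visitCount a N g n + 1))
        ≤ q ^ (k - (visitCount a N g n + 1) + 1) := by
          rw [pow_succ']; exact mul_le_mul_of_nonneg_right (hq w) (pow_nonneg hq0 _)
      _ ≤ q ^ (k - visitCount a N g n) := pow_le_pow_of_le_one hq0 hq1 (by omega)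
  · simp only [hvalid, hvisit, true_and, if_false, add_zero]
    rw [Finset.sum_congr rfl fun x _ => by rw [if_pos fun h1 h2 => absurd ⟨h1, h2⟩ hvisit],
      ← Finset.sum_mul, hκ1, one_mul]

variable [MeasurableSpace S] {μ : Measure (ℕ → S)}

theorem IsPathMeasure.measure_infinite_avoidsStep_le (hμ : IsPathMeasure κ s μ)
    (hκ0 : ∀ w s t, 0 ≤ κ w s t) (hκ1 : ∀ w s, ∑ t, κ w s t = 1) {p : ℝ} (hp0 : 0 ≤ p)
    (hp : ∀ w, p ≤ κ w a b) (N k : ℕ) :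
    μ {ω | {n | ω n = a}.Infinite ∧ ∀ n ≥ N, ω n = a → ω (n + 1) ≠ b} ≤
      ENNReal.ofReal ((1 - p) ^ k) := by
  have hq0 : 0 ≤ 1 - p := sub_nonneg.mpr ((hp []).trans (kernel_le_one hκ0 hκ1 [] a b))
  have hstep := sum_mul_avoidPotential_le (s := s) (N := N) (k := k) hκ0 hκ1
    (fun w => sub_le_sub_left (hp w) 1) (by linarith)
  have hstart : ∑ x, avoidPotential s a b N k (1 - p) 0 (fun _ => x) = (1 - p) ^ k := by
    simp [avoidPotential, AvoidsStep, visitCount]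
  have hbound (n : ℕ) : μ {ω | AvoidsStep a b N ω n ∧ k ≤ visitCount a N ω n} ≤
      ENNReal.ofReal ((1 - p) ^ k) := by
    refine (hμ.measure_le_sum_pathWeight hκ0 n fun g g' h hg =>
      ⟨(avoidsStep_congr h).mp hg.1, (visitCount_congr fun i hi => h i hi.le) ▸ hg.2⟩).trans
      (ENNReal.ofReal_le_ofReal ?_)
    rw [← hstart]
    refine le_trans (Finset.sum_le_sum fun f _ => ?_)
      (sum_pathWeight_mul_le (V := avoidPotential s a b N k (1 - p)) hκ0
        (fun n _ _ h => avoidPotential_congr h) hstep n)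
    split_ifs with hf
    · rw [avoidPotential, if_pos ⟨hf.1, hf.2.1⟩, Nat.sub_eq_zero_of_le hf.2.2, pow_zero, mul_one]
    · refine mul_nonneg (pathWeight_nonneg hκ0 _ _) ?_
      unfold avoidPotential
      split_ifs
      exacts [pow_nonneg hq0 _, le_rfl]
  -- Requiring avoidance at all times, not only before `n`, makes `F` monotone.
  let F : ℕ → Set (ℕ → S) := fun n =>
    {ω | (∀ i ≥ N, ω i = a → ω (i + 1) ≠ b) ∧ k ≤ visitCount a N ω n}
  have hF : Monotone F := fun m n hmn ω hω => ⟨hω.1, hω.2.trans (visitCount_mono hmn)⟩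
  have hFsub (n : ℕ) : F n ⊆ {ω | AvoidsStep a b N ω n ∧ k ≤ visitCount a N ω n} :=
    fun ω hω => ⟨fun i _ hN => hω.1 i hN, hω.2⟩
  calc μ {ω | {n | ω n = a}.Infinite ∧ ∀ n ≥ N, ω n = a → ω (n + 1) ≠ b}
      ≤ μ (⋃ n, F n) := measure_mono fun ω hω =>
        Set.mem_iUnion.mpr ((exists_le_visitCount hω.1 N k).imp fun n hn => ⟨hω.2, hn⟩)
    _ = ⨆ n, μ (F n) := hF.measure_iUnion
    _ ≤ _ := iSup_le fun n => (measure_mono (hFsub n)).trans (hbound n)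

theorem IsPathMeasure.ae_frequently_step (hμ : IsPathMeasure κ s μ)
    (hκ0 : ∀ w s t, 0 ≤ κ w s t) (hκ1 : ∀ w s, ∑ t, κ w s t = 1) {p : ℝ} (hp0 : 0 < p)
    (hp : ∀ w, p ≤ κ w a b) :
    ∀ᵐ ω ∂μ, (∃ᶠ n in atTop, ω n = a) → ∃ᶠ n in atTop, ω n = a ∧ ω (n + 1) = b := by
  have hq0 : 0 ≤ 1 - p := sub_nonneg.mpr ((hp []).trans (kernel_le_one hκ0 hκ1 [] a b))
  have hlim : Tendsto (fun k : ℕ => ENNReal.ofReal ((1 - p) ^ k)) atTop (nhds 0) := by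
    simp_rw [ENNReal.ofReal_pow hq0]
    exact ENNReal.tendsto_pow_atTop_nhds_zero_of_lt_one (ENNReal.ofReal_lt_one.mpr (by linarith))
  have hnull (N : ℕ) :
      ∀ᵐ ω ∂μ, {n | ω n = a}.Infinite → ∃ n ≥ N, ω n = a ∧ ω (n + 1) = b := by
    have h0 := ge_of_tendsto' hlim (hμ.measure_infinite_avoidsStep_le hκ0 hκ1 hp0.le hp N)
    refine measure_mono_null (fun ω hω => ?_) (nonpos_iff_eq_zero.mp h0)
    obtain ⟨hinf, hno⟩ := Classical.not_imp.mp hω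
    exact ⟨hinf, fun n hn ha hb => hno ⟨n, hn, ha, hb⟩⟩
  filter_upwards [ae_all_iff.mpr hnull] with ω hω hfreq
  exact frequently_atTop.mpr fun N => hω N (Nat.frequently_atTop_iff_infinite.mp hfreq)

end Fairness

section MDP

variable {S : Type*} {E : S → Set S} {S1 SP : Set S} {δ : S → S → ℝ} {σ : List S → S → S → ℝ}

noncomputable def mdpKernel (SP : Set S) (δ : S → S → ℝ) (σ : List S → S → S → ℝ) :
    List S → S → S → ℝ :=
  fun w s t => if s ∈ SP then δ s t else σ w s t

theorem mdpKernel_nonneg (hδ0 : ∀ s t, 0 ≤ δ s t) (hσ0 : ∀ w s t, 0 ≤ σ w s t)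
    (w : List S) (s t : S) : 0 ≤ mdpKernel SP δ σ w s t := by
  unfold mdpKernel
  split_ifs
  exacts [hδ0 s t, hσ0 w s t]

theorem mem_left_of_notMem_right (hpart : S1 ∪ SP = Set.univ) {s : S} (hs : s ∉ SP) : s ∈ S1 :=
  ((hpart ▸ Set.mem_univ s : s ∈ S1 ∪ SP)).resolve_right hs

theorem mdpKernel_sum [Fintype S] (hpart : S1 ∪ SP = Set.univ) (hδ1 : ∀ s ∈ SP, ∑ t, δ s t = 1)
    (hσ1 : ∀ w, ∀ s ∈ S1, ∑ t, σ w s t = 1) (w : List S) (s : S) :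
    ∑ t, mdpKernel SP δ σ w s t = 1 := by
  by_cases hs : s ∈ SP
  · simp only [mdpKernel, if_pos hs]
    exact hδ1 s hs
  · simp only [mdpKernel, if_neg hs]
    exact hσ1 w s (mem_left_of_notMem_right hpart hs)

theorem mdpKernel_eq_zero (hpart : S1 ∪ SP = Set.univ) (hδ0 : ∀ s t, 0 ≤ δ s t)
    (hδE : ∀ s ∈ SP, ∀ t, 0 < δ s t ↔ t ∈ E s) (hσ0 : ∀ w s t, 0 ≤ σ w s t)
    (hσE : ∀ w, ∀ s ∈ S1, ∀ t, 0 < σ w s t → t ∈ E s) (w : List S) (s t : S) (ht : t ∉ E s) :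
    mdpKernel SP δ σ w s t = 0 := by
  unfold mdpKernel
  split_ifs with hs
  · exact (hδ0 s t).eq_or_lt.resolve_right (fun h => ht ((hδE s hs t).mp h)) |>.symm
  · exact (hσ0 w s t).eq_or_lt.resolve_right
      (fun h => ht (hσE w s (mem_left_of_notMem_right hpart hs) t h)) |>.symm

end MDP

theorem infOcc_is_endComponent_general {S : Type*} [Fintype S]
    [MeasurableSpace S]
    (E : S → Set S) (S1 SP : Set S)
    (hpart : S1 ∪ SP = Set.univ)
    (δ : S → S → ℝ) (hδ0 : ∀ s t, 0 ≤ δ s t)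
    (hδE : ∀ s ∈ SP, ∀ t, 0 < δ s t ↔ t ∈ E s)
    (hδ1 : ∀ s ∈ SP, ∑ t, δ s t = 1)
    (σ : List S → S → S → ℝ) (hσ0 : ∀ w s t, 0 ≤ σ w s t)
    (hσ1 : ∀ w, ∀ s ∈ S1, ∑ t, σ w s t = 1)
    (hσE : ∀ w, ∀ s ∈ S1, ∀ t, 0 < σ w s t → t ∈ E s)
    (μ : S → Measure (ℕ → S)) (hprob : ∀ s, IsProbabilityMeasure (μ s))
    (hcyl : ∀ (s : S) (n : ℕ) (path : ℕ → S),
      μ s {ω | ∀ i ≤ n, ω i = path i} =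
        if path 0 = s then
          ENNReal.ofReal (∏ i ∈ Finset.range n,
            (if path i ∈ SP then δ (path i) (path (i + 1))
             else σ (List.ofFn fun j : Fin i => path j) (path i) (path (i + 1))))
        else 0) :
    ∀ s : S, μ s {ω | IsEndComponent E SP (InfOcc ω)} = 1 := by
  intro s
  have hμ : IsPathMeasure (mdpKernel SP δ σ) s (μ s) := hcyl s
  have hκ0 := mdpKernel_nonneg (SP := SP) hδ0 hσ0
  have hκ1 := mdpKernel_sum hpart hδ1 hσ1
  have hfair : ∀ᵐ ω ∂μ s, ∀ a ∈ SP, ∀ b ∈ E a,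
      (∃ᶠ n in atTop, ω n = a) → ∃ᶠ n in atTop, ω n = a ∧ ω (n + 1) = b := by
    simp only [ae_all_iff, eventually_imp_distrib_left]
    exact fun a ha b hb =>
      hμ.ae_frequently_step hκ0 hκ1 ((hδE a ha b).mpr hb) fun w => (if_pos ha).ge
  have hEC : ∀ᵐ ω ∂μ s, IsEndComponent E SP (InfOcc ω) := by
    filter_upwards [hμ.ae_mem_edge hκ0 (mdpKernel_eq_zero hpart hδ0 hδE hσ0 hσE), hfair]
      with ω hedge hω
    exact isEndComponent_infOcc hedge fun a ha haSP b hb =>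
      hω a haSP b hb (mem_infOcc_iff_frequently.mp ha)
  have := hprob s
  exact (measure_congr (ae_eq_univ.mpr hEC)).trans measure_univ

/-- Lemma 1: in a finite MDP, for every start state `s` and every
strategy `σ`, with probability 1 the set of states visited infinitely often is an end
component. The path measure `μ s` induced by the strategy `σ` and the transition
function `δ` is characterized by its cylinder probabilities. -/
theorem infOcc_is_endComponent {S : Type*} [Fintype S] [Nonempty S]
    [MeasurableSpace S] [MeasurableSingletonClass S]
    (E : S → Set S) (S1 SP : Set S)
    (hpart : S1 ∪ SP = Set.univ) (hdisj : Disjoint S1 SP)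
    (hE : ∀ s, (E s).Nonempty)
    (δ : S → S → ℝ) (hδ0 : ∀ s t, 0 ≤ δ s t)
    (hδE : ∀ s ∈ SP, ∀ t, 0 < δ s t ↔ t ∈ E s)
    (hδ1 : ∀ s ∈ SP, ∑ t, δ s t = 1)
    (σ : List S → S → S → ℝ) (hσ0 : ∀ w s t, 0 ≤ σ w s t)
    (hσ1 : ∀ w, ∀ s ∈ S1, ∑ t, σ w s t = 1)
    (hσE : ∀ w, ∀ s ∈ S1, ∀ t, 0 < σ w s t → t ∈ E s)
    (μ : S → Measure (ℕ → S)) (hprob : ∀ s, IsProbabilityMeasure (μ s))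
    (hcyl : ∀ (s : S) (n : ℕ) (path : ℕ → S),
      μ s {ω | ∀ i ≤ n, ω i = path i} =
        if path 0 = s then
          ENNReal.ofReal (∏ i ∈ Finset.range n,
            (if path i ∈ SP then δ (path i) (path (i + 1))
             else σ (List.ofFn fun j : Fin i => path j) (path i) (path (i + 1))))
        else 0) :
    ∀ s : S, μ s {ω | IsEndComponent E SP (InfOcc ω)} = 1 :=
  infOcc_is_endComponent_general E S1 SP hpart δ hδ0 hδE hδ1 σ hσ0 hσ1 hσE μ hprob hcyl
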